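/- arXiv:1409.0582 — 2 statements merged into one kernel-verified Lean document; each statement's English description precedes it below -/
import Mathlib

section
/- If a binary relation ρ ⊆ Ω × Ω on a finite set Ω is transitive, then its convex closure r, defined by r(s) = { μ ∈ DΩ | μ({ s' | (s,s') ∉ ρ }) = 0 }, satisfies r·(r + δ) ⊑ r, i.e., for every state s and every distribution ν obtained by first sampling t from some μ ∈ r(s) and then applying a deterministic refinement f of r + δ (so ν(u) = ∑_t f(t)(u)·μ(t) where for each t either f(t) = δ_t or f(t) ∈ r(t)), we have ν ∈ r(s). -/
/-- A probability distribution on a finite set `Ω`. -/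
def IsDist {Ω : Type*} [Fintype Ω] (μ : Ω → ℝ) : Prop :=
  (∀ s, 0 ≤ μ s) ∧ (∀ s, μ s ≤ 1) ∧ ∑ s, μ s = 1

/-- The measure of a subset `O ⊆ Ω` under `μ`. -/
noncomputable def measOf {Ω : Type*} [Fintype Ω] (μ : Ω → ℝ) (O : Set Ω) : ℝ :=
  ∑ s, O.indicator μ s

/-- The convex closure of a relation `ρ`: `r(s)` consists of all distributions
assigning probability `0` to `{s' | ¬ ρ s s'}`. -/
def convClosure {Ω : Type*} [Fintype Ω] (ρ : Ω → Ω → Prop) :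
    Ω → Set (Ω → ℝ) :=
  fun s => {μ | IsDist μ ∧ measOf μ {s' | ¬ ρ s s'} = 0}

lemma measOf_zero_iff {Ω : Type*} [Fintype Ω] (μ : Ω → ℝ) (h0 : ∀ s, 0 ≤ μ s)
    (O : Set Ω) : measOf μ O = 0 ↔ ∀ t ∈ O, μ t = 0 := by
  unfold measOf
  rw [Finset.sum_eq_zero_iff_of_nonneg]
  · constructor
    · intro h t ht
      have := h t (Finset.mem_univ t)
      rwa [Set.indicator_of_mem ht] at this
    · intro h t _
      by_cases ht : t ∈ O
      · rw [Set.indicator_of_mem ht]; exact h t ht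
      · rw [Set.indicator_of_notMem ht]
  · intro t _
    by_cases ht : t ∈ O
    · rw [Set.indicator_of_mem ht]; exact h0 t
    · rw [Set.indicator_of_notMem ht]

theorem transitive_convex_closure {Ω : Type*} [Fintype Ω] [DecidableEq Ω]
    (ρ : Ω → Ω → Prop) (htrans : ∀ a b c, ρ a b → ρ b c → ρ a c)
    (s : Ω) (μ : Ω → ℝ) (hμ : μ ∈ convClosure ρ s)
    (f : Ω → Ω → ℝ)
    (hf : ∀ t, (f t = fun u => if u = t then (1 : ℝ) else 0) ∨
      f t ∈ convClosure ρ t)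
    (ν : Ω → ℝ) (hν : ν = fun u => ∑ t, f t u * μ t) :
    ν ∈ convClosure ρ s := by
  obtain ⟨⟨hμ0, hμ1, hμsum⟩, hμmeas⟩ := hμ
  have hμz : ∀ t, ¬ ρ s t → μ t = 0 := by
    intro t ht
    exact (measOf_zero_iff μ hμ0 _).mp hμmeas t ht
  -- f t is a distribution for every t
  have hfdist : ∀ t, IsDist (f t) := by
    intro t
    rcases hf t with h | h
    · rw [h]
      refine ⟨fun u => by positivity, fun u => by dsimp only; split <;> norm_num, ?_⟩
      simp
    · exact h.1
  have hf0 : ∀ t u, 0 ≤ f t u := fun t u => (hfdist t).1 u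
  have hν0 : ∀ u, 0 ≤ ν u := by
    intro u; rw [hν]
    exact Finset.sum_nonneg fun t _ => mul_nonneg (hf0 t u) (hμ0 t)
  have hνsum : ∑ u, ν u = 1 := by
    rw [hν]
    rw [Finset.sum_comm]
    calc ∑ t, ∑ u, f t u * μ t = ∑ t, μ t := by
          refine Finset.sum_congr rfl fun t _ => ?_
          rw [← Finset.sum_mul, (hfdist t).2.2, one_mul]
      _ = 1 := hμsum
  refine ⟨⟨hν0, ?_, hνsum⟩, ?_⟩
  · intro u
    calc ν u ≤ ∑ u, ν u := Finset.single_le_sum (fun v _ => hν0 v) (Finset.mem_univ u)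
      _ = 1 := hνsum
  · rw [measOf_zero_iff ν hν0]
    intro u hu
    rw [hν]
    refine Finset.sum_eq_zero fun t _ => ?_
    by_cases hst : ρ s t
    · have hftu : f t u = 0 := by
        rcases hf t with h | h
        · rw [h]
          simp only
          split
          · next heq => exact absurd (heq ▸ hst) hu
          · rfl
        · refine (measOf_zero_iff (f t) (hf0 t) _).mp h.2 u ?_
          intro htu
          exact hu (htrans s t u hst htu)
      rw [hftu, zero_mul]
    · rw [hμz t hst, mul_zero]
end

section
/- In a probabilistic Kleene algebra, if r satisfies r·(r + 1) ≤ r, then r* = 1 + r. -/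
/-- A probabilistic Kleene algebra: an idempotent semiring with right
sub-distributivity only, a star with unfold, left induction and weak right
induction. The order is encoded by `x ≤ y ↔ add x y = y`. -/
structure ProbKleeneAlgebra (K : Type*) where
  add : K → K → K
  mul : K → K → K
  zero : K
  one : K
  star : K → K
  add_idem : ∀ x, add x x = x
  add_comm : ∀ x y, add x y = add y x
  add_assoc : ∀ x y z, add x (add y z) = add (add x y) z
  add_zero : ∀ x, add x zero = x
  mul_one : ∀ x, mul x one = x
  one_mul : ∀ x, mul one x = x
  mul_assoc : ∀ x y z, mul x (mul y z) = mul (mul x y) z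
  zero_mul : ∀ x, mul zero x = zero
  mul_zero : ∀ x, mul x zero = zero
  right_distrib : ∀ x y z, mul (add x y) z = add (mul x z) (mul y z)
  left_subdistrib : ∀ x y z,
    add (add (mul x y) (mul x z)) (mul x (add y z)) = mul x (add y z)
  star_unfold : ∀ x, star x = add one (mul x (star x))
  star_left_ind : ∀ x y z,
    add (add z (mul x y)) y = y → add (mul (star x) z) y = y
  star_weak_right_ind : ∀ x y z,
    add (add z (mul y (add x one))) y = y → add (mul z (star x)) y = y

namespace ProbKleeneAlgebra

variable {K : Type*} (A : ProbKleeneAlgebra K)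

theorem le_trans' {a b c : K} (h1 : A.add a b = b) (h2 : A.add b c = c) :
    A.add a c = c := by
  calc A.add a c = A.add a (A.add b c) := by rw [h2]
    _ = A.add (A.add a b) c := A.add_assoc _ _ _
    _ = c := by rw [h1, h2]

theorem le_add_left (a b : K) : A.add a (A.add a b) = A.add a b := by
  rw [A.add_assoc, A.add_idem]

theorem le_add_right (a b : K) : A.add b (A.add a b) = A.add a b := by
  rw [A.add_comm a b]; exact A.le_add_left b a

theorem sup_le {a b c : K} (h1 : A.add a c = c) (h2 : A.add b c = c) :
    A.add (A.add a b) c = c := by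
  rw [← A.add_assoc, h2, h1]

theorem one_le_star (x : K) : A.add A.one (A.star x) = A.star x := by
  conv_lhs => rw [A.star_unfold x]
  rw [A.add_assoc, A.add_idem, ← A.star_unfold]

theorem le_mul_star (x : K) : A.add x (A.mul x (A.star x)) = A.mul x (A.star x) := by
  have hs := A.left_subdistrib x A.one (A.star x)
  rw [A.one_le_star, A.mul_one] at hs
  calc A.add x (A.mul x (A.star x))
      = A.add x (A.add (A.mul x (A.star x)) (A.mul x (A.star x))) := by rw [A.add_idem]
    _ = A.add (A.add x (A.mul x (A.star x))) (A.mul x (A.star x)) := A.add_assoc _ _ _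
    _ = A.mul x (A.star x) := hs

theorem le_star (x : K) : A.add x (A.star x) = A.star x := by
  have h1 : A.add x (A.add A.one (A.mul x (A.star x))) = A.add A.one (A.mul x (A.star x)) := by
    refine A.le_trans' (A.le_mul_star x) ?_
    exact A.le_add_right _ _
  rw [← A.star_unfold] at h1
  exact h1

end ProbKleeneAlgebra

theorem pka_star_of_transitive {K : Type*} (A : ProbKleeneAlgebra K) (r : K)
    (h : A.add (A.mul r (A.add r A.one)) r = r) :
    A.star r = A.add A.one r := by
  -- star r ≤ 1 + r
  have hub : A.add (A.mul (A.star r) A.one) (A.add A.one r) = A.add A.one r := by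
    apply A.star_left_ind
    apply A.sup_le
    · exact A.le_add_left _ _
    · have h' := h
      rw [A.add_comm r A.one] at h'
      exact A.le_trans' h' (A.le_add_right A.one r)
  rw [A.mul_one] at hub
  -- 1 + r ≤ star r
  have hlb : A.add (A.add A.one r) (A.star r) = A.star r :=
    A.sup_le (A.one_le_star r) (A.le_star r)
  calc A.star r = A.add (A.add A.one r) (A.star r) := hlb.symm
    _ = A.add (A.star r) (A.add A.one r) := A.add_comm _ _
    _ = A.add A.one r := hub
end
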